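/- If M := sup_{q≥−1} λ_q^{δ+n/r} a_q < ∞, then Λ_b < ∞ and Λ_b ≤ C · max(1, M/μ) for a constant C depending only on n, r, δ, L, c and C_B. -/

import Mathlib

open scoped ENNReal

/-- The exponent `n/r` for `r ∈ [1,∞]`, with the convention `n/r = 0` when `r = ∞`. -/
noncomputable def nOverR (n : ℕ) (r : ℝ≥0∞) : ℝ :=
  if r = ⊤ then 0 else (n : ℝ) / r.toReal

/-- The admissibility condition at level `q` in the definition of the abstract magnetic
determining wavenumber on the `n`-torus (`λ_q = 2^q`, `s = n/r`):
`(L λ_{p-q})^δ λ_p^{s} a_p < c μ` for every integer `p > q`, and `λ_q^{-1} G_q < c μ`. -/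
def GoodB (L c μ s δ : ℝ) (a G : ℤ → ℝ) (q : ℕ) : Prop :=
  (∀ p : ℤ, (q : ℤ) < p →
      (L * (2:ℝ) ^ (p - (q : ℤ))) ^ δ * ((2:ℝ) ^ p) ^ s * a p < c * μ) ∧
    ((2:ℝ) ^ (q : ℤ))⁻¹ * G q < c * μ

/-- The abstract magnetic determining wavenumber `Λ_b = λ_Q = 2^Q`, where `Q` is the
least admissible natural number; `Λ_b = ∞` if no natural number is admissible. -/
noncomputable def LambdaB (L c μ s δ : ℝ) (a G : ℤ → ℝ) : ℝ≥0∞ :=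
  sInf {x : ℝ≥0∞ | ∃ q : ℕ, GoodB L c μ s δ a G q ∧ x = 2 ^ q}

/-! Write `M` for the Besov bound and `ρ = 2^(1-δ) < 1`. A high block factors as
`(L λ_{p-q})^δ λ_p^{n/r} a_p = L^δ λ_q^{-δ} · λ_p^{δ+n/r} a_p ≤ L^δ M / λ_q`, while in the
Bernstein bound `λ_p^{1+n/r} a_p ≤ ρ^p M`, so `G_q ≤ C_B K M` with `K = ∑_{p ≥ -1} ρ^p`.
Hence every level with `λ_q > (L^δ + C_B K) M / (c μ)` is admissible, and the least power of two
above `max 1 ((L^δ + C_B K) / c) · max 1 (M / μ)` is at most twice that number. -/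

theorem one_sub_mul_sum_zpow_Icc {K : Type*} [Field K] {ρ : K} (hρ : ρ ≠ 0) {m n : ℤ}
    (h : m ≤ n + 1) : (1 - ρ) * ∑ p ∈ Finset.Icc m n, ρ ^ p = ρ ^ m - ρ ^ (n + 1) := by
  induction n, (show m - 1 ≤ n by omega) using Int.leInduction with
  | base => simp
  | succ n hmn ih =>
    rw [← Finset.insert_Icc_right_eq_Icc_add_one (by omega), Finset.sum_insert (by simp),
      mul_add, ih (by omega), zpow_add_one₀ hρ (n + 1)]
    ring

theorem sum_zpow_Icc_le_of_lt_one {ρ : ℝ} (h₀ : 0 < ρ) (h₁ : ρ < 1) (m n : ℤ) :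
    ∑ p ∈ Finset.Icc m n, ρ ^ p ≤ ρ ^ m / (1 - ρ) := by
  rcases le_or_gt m (n + 1) with h | h
  · rw [le_div_iff₀' (by linarith), one_sub_mul_sum_zpow_Icc h₀.ne' h]
    linarith [zpow_pos h₀ (n + 1)]
  · rw [Finset.Icc_eq_empty (by omega), Finset.sum_empty]
    exact div_nonneg (zpow_pos h₀ m).le (by linarith)

theorem exists_two_pow_mem_Ioc {X : ℝ} (hX : 1 ≤ X) : ∃ Q : ℕ, (2:ℝ) ^ Q ∈ Set.Ioc X (2 * X) := by
  obtain ⟨n, hle, hlt⟩ := exists_nat_pow_near hX one_lt_two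
  exact ⟨n + 1, hlt, by rw [pow_succ']; linarith⟩

theorem high_freq_term_le {L δ s M A : ℝ} (hL : 0 ≤ L) (hδ : 1 ≤ δ) (hM : 0 ≤ M) {p q : ℤ}
    (hq : 0 ≤ q) (hA : ((2:ℝ) ^ p) ^ (δ + s) * A ≤ M) :
    (L * (2:ℝ) ^ (p - q)) ^ δ * ((2:ℝ) ^ p) ^ s * A ≤ L ^ δ * M / 2 ^ q := by
  have h2p : (0:ℝ) < 2 ^ p := by positivity
  have h2q : (0:ℝ) < 2 ^ q := by positivity
  calc (L * (2:ℝ) ^ (p - q)) ^ δ * ((2:ℝ) ^ p) ^ s * A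
      = L ^ δ * (((2:ℝ) ^ p) ^ (δ + s) * A) / ((2:ℝ) ^ q) ^ δ := by
        rw [zpow_sub₀ two_ne_zero, Real.mul_rpow hL (by positivity), Real.div_rpow h2p.le h2q.le,
          Real.rpow_add h2p]
        ring
    _ ≤ L ^ δ * M / ((2:ℝ) ^ q) ^ δ := by gcongr
    _ ≤ L ^ δ * M / 2 ^ q := by
        gcongr
        exact Real.self_le_rpow_of_one_le (one_le_zpow₀ one_le_two hq) hδ

theorem low_freq_term_eq (δ s A : ℝ) (p : ℤ) :
    ((2:ℝ) ^ p) ^ (1 + s) * A = ((2:ℝ) ^ (1 - δ)) ^ p * (((2:ℝ) ^ p) ^ (δ + s) * A) := by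
  rw [Real.rpow_zpow_comm zero_le_two, ← mul_assoc, ← Real.rpow_add (by positivity)]
  ring_nf

-- The sum `∑_{p ≥ -1} ρ^p` of the geometric series with ratio `ρ = 2^(1-δ)`.
noncomputable def lowFreqConst (δ : ℝ) : ℝ :=
  ((2:ℝ) ^ (1 - δ)) ^ (-1 : ℤ) / (1 - (2:ℝ) ^ (1 - δ))

theorem lowFreqConst_pos {δ : ℝ} (hδ : 1 < δ) : 0 < lowFreqConst δ := by
  have hρ₁ : (2:ℝ) ^ (1 - δ) < 1 := Real.rpow_lt_one_of_one_lt_of_neg one_lt_two (by linarith)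
  exact div_pos (by positivity) (by linarith)

theorem low_freq_sum_le {δ s M : ℝ} {a : ℤ → ℝ} (hδ : 1 < δ) (hM0 : 0 ≤ M)
    (hM : ∀ p : ℤ, -1 ≤ p → ((2:ℝ) ^ p) ^ (δ + s) * a p ≤ M) (q : ℤ) :
    ∑ p ∈ Finset.Icc (-1 : ℤ) q, ((2:ℝ) ^ p) ^ (1 + s) * a p
      ≤ lowFreqConst δ * M := by
  have hρ₀ : (0:ℝ) < 2 ^ (1 - δ) := by positivity
  have hρ₁ : (2:ℝ) ^ (1 - δ) < 1 := Real.rpow_lt_one_of_one_lt_of_neg one_lt_two (by linarith)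
  calc ∑ p ∈ Finset.Icc (-1 : ℤ) q, ((2:ℝ) ^ p) ^ (1 + s) * a p
      ≤ ∑ p ∈ Finset.Icc (-1 : ℤ) q, ((2:ℝ) ^ (1 - δ)) ^ p * M := by
        refine Finset.sum_le_sum fun p hp => ?_
        rw [low_freq_term_eq δ]
        gcongr
        exact hM p (Finset.mem_Icc.mp hp).1
    _ = (∑ p ∈ Finset.Icc (-1 : ℤ) q, ((2:ℝ) ^ (1 - δ)) ^ p) * M := (Finset.sum_mul ..).symm
    _ ≤ _ := by gcongr; exact sum_zpow_Icc_le_of_lt_one hρ₀ hρ₁ (-1) q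

theorem goodB_of_lt {L c μ s δ CB M : ℝ} {a G : ℤ → ℝ} (hL : 0 ≤ L) (hδ : 1 < δ) (hCB : 0 ≤ CB)
    (hM0 : 0 ≤ M)
    (hGB : ∀ q : ℤ, -1 ≤ q →
      G q ≤ CB * ∑ p ∈ Finset.Icc (-1 : ℤ) q, ((2:ℝ) ^ p) ^ (1 + s) * a p)
    (hM : ∀ q : ℤ, -1 ≤ q → ((2:ℝ) ^ q) ^ (δ + s) * a q ≤ M) {Q : ℕ}
    (hQ : (L ^ δ + CB * lowFreqConst δ) * M < c * μ * 2 ^ (Q : ℤ)) :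
    GoodB L c μ s δ a G Q := by
  have h2Q : (0:ℝ) < 2 ^ (Q : ℤ) := by positivity
  have hK := (lowFreqConst_pos hδ).le
  constructor
  · intro p hp
    calc (L * (2:ℝ) ^ (p - Q)) ^ δ * ((2:ℝ) ^ p) ^ s * a p
        ≤ L ^ δ * M / 2 ^ (Q : ℤ) :=
          high_freq_term_le hL hδ.le hM0 (by positivity) (hM p (by omega))
      _ < c * μ := by rw [div_lt_iff₀ h2Q]; nlinarith [mul_nonneg (mul_nonneg hCB hK) hM0]
  · calc ((2:ℝ) ^ (Q : ℤ))⁻¹ * G Q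
        ≤ ((2:ℝ) ^ (Q : ℤ))⁻¹ * (CB * (lowFreqConst δ * M)) := by
          gcongr
          exact (hGB Q (by omega)).trans (by gcongr; exact low_freq_sum_le hδ hM0 hM Q)
      _ < c * μ := by
          rw [inv_mul_lt_iff₀ h2Q]; nlinarith [mul_nonneg (Real.rpow_nonneg hL δ) hM0]

theorem lambdaB_le_of_goodB {L c μ s δ : ℝ} {a G : ℤ → ℝ} {q : ℕ} (h : GoodB L c μ s δ a G q) :
    LambdaB L c μ s δ a G ≤ 2 ^ q :=
  sInf_le ⟨q, h, rfl⟩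

theorem uniform_wavenumber_bound_from_besov_general
    (n : ℕ) (r : ℝ≥0∞) (δ L c CB : ℝ)
    (hδ : 1 < δ) (hL : 1 ≤ L) (hc : 0 < c) (hCB : 0 < CB) :
    ∃ C : ℝ, 0 < C ∧
      ∀ (μ M : ℝ) (a G : ℤ → ℝ), 0 < μ →
        (∀ q : ℤ, -1 ≤ q → 0 ≤ a q) →
        (∀ q : ℤ, -1 ≤ q → 0 ≤ G q) →
        (∀ q : ℤ, -1 ≤ q →
          G q ≤ CB * ∑ p ∈ Finset.Icc (-1 : ℤ) q, ((2:ℝ) ^ p) ^ (1 + nOverR n r) * a p) →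
        (∀ q : ℤ, -1 ≤ q → ((2:ℝ) ^ q) ^ (δ + nOverR n r) * a q ≤ M) →
        LambdaB L c μ (nOverR n r) δ a G ≠ ⊤ ∧
          LambdaB L c μ (nOverR n r) δ a G ≤ ENNReal.ofReal (C * max 1 (M / μ)) := by
  set A := (L ^ δ + CB * lowFreqConst δ) / c
  refine ⟨2 * max 1 A, by positivity, fun μ M a G hμ ha _ hGB hM => ?_⟩
  have hM0 : 0 ≤ M := (mul_nonneg (by positivity) (ha (-1) le_rfl)).trans (hM (-1) le_rfl)
  obtain ⟨Q, hQX, hQle⟩ := exists_two_pow_mem_Ioc (X := max 1 A * max 1 (M / μ))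
    (one_le_mul_of_one_le_of_one_le (le_max_left _ _) (le_max_left _ _))
  have hQ : (L ^ δ + CB * lowFreqConst δ) * M < c * μ * 2 ^ (Q : ℤ) :=
    calc (L ^ δ + CB * lowFreqConst δ) * M = c * μ * (A * (M / μ)) := by
          simp only [A]; field_simp
      _ ≤ c * μ * (max 1 A * max 1 (M / μ)) := by
          gcongr <;> exact le_max_right _ _
      _ < c * μ * 2 ^ (Q : ℤ) := by gcongr; exact_mod_cast hQX
  have hΛ := lambdaB_le_of_goodB (goodB_of_lt (by linarith) hδ hCB.le hM0 hGB hM hQ)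
  refine ⟨ne_top_of_le_ne_top (by simp) hΛ, hΛ.trans ?_⟩
  rw [mul_assoc, ← ENNReal.ofReal_ofNat 2, ← ENNReal.ofReal_pow zero_le_two]
  exact ENNReal.ofReal_le_ofReal hQle

/-- uniform bound on the magnetic determining wavenumber from Besov
regularity. If `M = sup_{q ≥ -1} λ_q^{δ+n/r} a_q < ∞` (expressed by `M` being an upper
bound of this family), then `Λ_b < ∞` and `Λ_b ≤ C max(1, M/μ)` for a constant `C`
depending only on `n, r, δ, L, c, C_B`. -/
theorem uniform_wavenumber_bound_from_besov
    (n : ℕ) (r : ℝ≥0∞) (δ L c CB : ℝ)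
    (hn : 2 ≤ n) (hr : 1 ≤ r) (hδ : 1 < δ) (hL : 1 ≤ L) (hc : 0 < c) (hCB : 0 < CB) :
    ∃ C : ℝ, 0 < C ∧
      ∀ (μ M : ℝ) (a G : ℤ → ℝ), 0 < μ →
        (∀ q : ℤ, -1 ≤ q → 0 ≤ a q) →
        (∀ q : ℤ, -1 ≤ q → 0 ≤ G q) →
        (∀ q : ℤ, -1 ≤ q →
          G q ≤ CB * ∑ p ∈ Finset.Icc (-1 : ℤ) q, ((2:ℝ) ^ p) ^ (1 + nOverR n r) * a p) →
        (∀ q : ℤ, -1 ≤ q → ((2:ℝ) ^ q) ^ (δ + nOverR n r) * a q ≤ M) →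
        LambdaB L c μ (nOverR n r) δ a G ≠ ⊤ ∧
          LambdaB L c μ (nOverR n r) δ a G ≤ ENNReal.ofReal (C * max 1 (M / μ)) :=
  uniform_wavenumber_bound_from_besov_general n r δ L c CB hδ hL hc hCB
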